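/- arXiv:1106.0422 — 3 statements merged into one kernel-verified Lean document; each statement's English description precedes it below -/
import Mathlib

section
/- Let G be a group, φ : G → ℝ a homogeneous quasimorphism with defect D(φ) > 0, and x ∈ [G,G]. Then |φ(x)| ≤ 2·D(φ)·cl(x), and consequently scl(x) ≥ |φ(x)|/(2·D(φ)). -/
/-!
A homogeneous quasimorphism is constant on conjugacy classes: `y ↦ φ (g * y * g⁻¹)` is again
homogeneous and within `2 D` of `φ`, and two homogeneous functions at bounded distance coincide.
Writing `⁅a, b⁆ = (a b a⁻¹) b⁻¹`, this gives `|φ ⁅a, b⁆| ≤ D`, so a product of `n` commutators has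
`|φ| ≤ 2 D n`. Applied to `xⁿ`, homogeneity turns this into `n |φ x| ≤ 2 D cl(xⁿ)`.
-/

open scoped commutatorElement

/-- `x` is a product of `n` commutators. -/
def IsProdOfComms {G : Type*} [Group G] (x : G) (n : ℕ) : Prop :=
  ∃ f g : Fin n → G, x = (List.ofFn fun i => ⁅f i, g i⁆).prod

/-- The commutator length of `x`. -/
noncomputable def cl {G : Type*} [Group G] (x : G) : ℕ :=
  sInf {n | IsProdOfComms x n}

/-- The stable commutator length of x ∈ [G,G]. -/
noncomputable def scl {G : Type*} [Group G] (x : G) : ℝ :=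
  ⨅ n : ℕ+, (cl (x ^ (n : ℕ)) : ℝ) / (n : ℕ)

section

variable {G : Type*} [Group G]

def IsQuasimorphism (φ : G → ℝ) (D : ℝ) : Prop :=
  ∀ x y : G, |φ (x * y) - φ x - φ y| ≤ D

def IsHomogeneous (φ : G → ℝ) : Prop :=
  ∀ (x : G) (n : ℤ), φ (x ^ n) = n * φ x

namespace IsHomogeneous

variable {φ ψ : G → ℝ}

theorem map_one (hφ : IsHomogeneous φ) : φ 1 = 0 := by
  simpa using hφ 1 0

theorem map_inv (hφ : IsHomogeneous φ) (x : G) : φ x⁻¹ = -φ x := by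
  simpa using hφ x (-1)

theorem map_pow (hφ : IsHomogeneous φ) (x : G) (n : ℕ) : φ (x ^ n) = n * φ x := by
  simpa using hφ x n

theorem comp_conj (hφ : IsHomogeneous φ) (g : G) : IsHomogeneous fun y => φ (g * y * g⁻¹) :=
  fun y n => by
    change φ (g * y ^ n * g⁻¹) = n * φ (g * y * g⁻¹)
    rw [← conj_zpow, hφ]

theorem eq_of_abs_sub_le (hφ : IsHomogeneous φ) (hψ : IsHomogeneous ψ) {C : ℝ}
    (hC : ∀ x, |φ x - ψ x| ≤ C) : φ = ψ := by
  funext x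
  have hmul : ∀ n : ℕ, n * |φ x - ψ x| ≤ C := fun n => by
    simpa [hφ.map_pow, hψ.map_pow, ← mul_sub, abs_mul] using hC (x ^ n)
  by_contra hne
  have hpos : 0 < |φ x - ψ x| := abs_pos.mpr (sub_ne_zero.mpr hne)
  obtain ⟨n, hn⟩ := exists_nat_gt (C / |φ x - ψ x|)
  linarith [hmul n, (div_lt_iff₀ hpos).mp hn]

end IsHomogeneous

namespace IsQuasimorphism

variable {φ : G → ℝ} {D : ℝ}

theorem abs_map_conj_sub_le (hq : IsQuasimorphism φ D) (hh : IsHomogeneous φ) (g y : G) :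
    |φ (g * y * g⁻¹) - φ y| ≤ 2 * D := by
  have h₂ := hq y g⁻¹
  rw [hh.map_inv] at h₂
  rw [mul_assoc]
  calc |φ (g * (y * g⁻¹)) - φ y|
      = |(φ (g * (y * g⁻¹)) - φ g - φ (y * g⁻¹)) + (φ (y * g⁻¹) - φ y - -φ g)| := by ring_nf
    _ ≤ D + D := (abs_add_le _ _).trans (add_le_add (hq g (y * g⁻¹)) h₂)
    _ = 2 * D := by ring

theorem map_conj (hq : IsQuasimorphism φ D) (hh : IsHomogeneous φ) (g y : G) :
    φ (g * y * g⁻¹) = φ y :=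
  congrFun ((hh.comp_conj g).eq_of_abs_sub_le hh (hq.abs_map_conj_sub_le hh g)) y

theorem abs_map_commutatorElement_le (hq : IsQuasimorphism φ D) (hh : IsHomogeneous φ)
    (a b : G) : |φ ⁅a, b⁆| ≤ D := by
  have h := hq (a * b * a⁻¹) b⁻¹
  rwa [hq.map_conj hh, hh.map_inv, sub_neg_eq_add, sub_add_cancel, ← commutatorElement_def] at h

theorem abs_map_list_prod_le (hq : IsQuasimorphism φ D) (h₁ : φ 1 = 0) {B : ℝ} {l : List G}
    (hl : ∀ c ∈ l, |φ c| ≤ B) : |φ l.prod| ≤ (B + D) * l.length := by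
  induction l with
  | nil => simp [h₁]
  | cons c t ih =>
    have hc := hl c List.mem_cons_self
    have ht := ih fun d hd => hl d (List.mem_cons_of_mem c hd)
    have hdef := hq c t.prod
    rw [List.prod_cons, List.length_cons, Nat.cast_succ]
    calc |φ (c * t.prod)|
        = |(φ (c * t.prod) - φ c - φ t.prod) + φ c + φ t.prod| := by ring_nf
      _ ≤ |φ (c * t.prod) - φ c - φ t.prod| + |φ c| + |φ t.prod| := abs_add_three _ _ _
      _ ≤ D + B + (B + D) * t.length := by gcongr
      _ = (B + D) * (t.length + 1) := by ring

theorem abs_le_of_isProdOfComms (hq : IsQuasimorphism φ D) (hh : IsHomogeneous φ) {x : G}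
    {n : ℕ} (hx : IsProdOfComms x n) : |φ x| ≤ 2 * D * n := by
  obtain ⟨f, g, rfl⟩ := hx
  have hl : ∀ c ∈ List.ofFn fun i => ⁅f i, g i⁆, |φ c| ≤ D := by
    simp only [List.mem_ofFn, forall_exists_index]
    rintro c i rfl
    exact hq.abs_map_commutatorElement_le hh (f i) (g i)
  simpa [two_mul] using hq.abs_map_list_prod_le hh.map_one hl

end IsQuasimorphism

theorem isProdOfComms_list_prod {l : List G} (hl : ∀ c ∈ l, c ∈ commutatorSet G) :
    IsProdOfComms l.prod l.length := by
  choose f g hfg using fun i : Fin l.length => (mem_commutatorSet_iff).mp (hl _ (l.get_mem i))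
  refine ⟨f, g, ?_⟩
  conv_lhs => rw [← List.ofFn_get l]
  simp only [hfg]

theorem exists_isProdOfComms {x : G} (hx : x ∈ commutator G) : ∃ n, IsProdOfComms x n := by
  have hinv : (commutatorSet G)⁻¹ ⊆ commutatorSet G := by
    rintro c ⟨a, b, h⟩
    exact ⟨b, a, by rw [← commutatorElement_inv, h, inv_inv]⟩
  rw [commutator_eq_closure, ← Subgroup.mem_toSubmonoid, Subgroup.closure_toSubmonoid,
    Set.union_eq_left.mpr hinv] at hx
  obtain ⟨l, hl, rfl⟩ := Submonoid.exists_list_of_mem_closure hx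
  exact ⟨l.length, isProdOfComms_list_prod hl⟩

theorem isProdOfComms_cl {x : G} (hx : x ∈ commutator G) : IsProdOfComms x (cl x) :=
  Nat.sInf_mem (exists_isProdOfComms hx)

theorem IsQuasimorphism.abs_le_two_mul_cl {φ : G → ℝ} {D : ℝ} (hq : IsQuasimorphism φ D)
    (hh : IsHomogeneous φ) {x : G} (hx : x ∈ commutator G) : |φ x| ≤ 2 * D * cl x :=
  hq.abs_le_of_isProdOfComms hh (isProdOfComms_cl hx)

end

/-- Easy direction of Bavard duality. -/
theorem bavard_easy_direction {G : Type*} [Group G] (φ : G → ℝ) (D : ℝ)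
    (hD : 0 < D)
    (hq : ∀ x y : G, |φ (x * y) - φ x - φ y| ≤ D)
    (hh : ∀ (x : G) (n : ℤ), φ (x ^ n) = n * φ x)
    (x : G) (hx : x ∈ commutator G) :
    |φ x| ≤ 2 * D * cl x ∧ |φ x| / (2 * D) ≤ scl x := by
  have hq : IsQuasimorphism φ D := hq
  have hh : IsHomogeneous φ := hh
  refine ⟨hq.abs_le_two_mul_cl hh hx, le_ciInf fun n => ?_⟩
  have hn : (0 : ℝ) < (n : ℕ) := by exact_mod_cast n.pos
  have hpow : (n : ℕ) * |φ x| ≤ 2 * D * cl (x ^ (n : ℕ)) := by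
    simpa [hh.map_pow, abs_mul] using hq.abs_le_two_mul_cl hh (pow_mem hx n)
  rw [div_le_div_iff₀ (by positivity) hn]
  linarith
end

section
/- Let G be a group and a, b ∈ G satisfying the braid relation aba = bab. Then (ba)⁶ = a²·(ba²b)²·a². -/
/-!
Put `Δ = a * b * a = b * a * b`. Conjugation by `Δ` swaps `a` and `b` (`a * Δ = Δ * b`,
`Δ * a = b * Δ`), and both sides equal `Δ ^ 4`: on the left `(b * a) ^ 6 = (bab)(aba)(bab)(aba)`,
and on the right the outer factors `a` are moved through `Δ`, turning `a² (b a² b)² a²` into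
`Δ (bab)(bab) Δ`. Only associativity is used, so everything holds in a monoid.
-/

namespace BraidRelation

variable {M : Type*} [Monoid M] {a b : M}

theorem mul_braid_eq_braid_mul (h : a * b * a = b * a * b) :
    a * (a * b * a) = (a * b * a) * b := by
  nth_rewrite 1 [h]
  simp only [mul_assoc]

theorem braid_mul_eq_mul_braid (h : a * b * a = b * a * b) :
    (a * b * a) * a = b * (a * b * a) := by
  nth_rewrite 1 [h]
  simp only [mul_assoc]

theorem mul_pow_six_eq_pow_four (h : a * b * a = b * a * b) : (b * a) ^ 6 = (a * b * a) ^ 4 := by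
  calc (b * a) ^ 6 = (b * a * b) * (a * b * a) * ((b * a * b) * (a * b * a)) := by
        simp only [pow_succ, pow_zero, one_mul, mul_assoc]
    _ = (a * b * a) ^ 4 := by
        rw [← h]
        simp only [pow_succ, pow_zero, one_mul, mul_assoc]

theorem sq_mul_sq_mul_sq_eq_pow_four (h : a * b * a = b * a * b) :
    a ^ 2 * (b * a ^ 2 * b) ^ 2 * a ^ 2 = (a * b * a) ^ 4 := by
  calc a ^ 2 * (b * a ^ 2 * b) ^ 2 * a ^ 2
        = a * (a * b * a) * (a * b * b * a) * ((a * b * a) * a) := by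
        simp only [pow_succ, pow_zero, one_mul, mul_assoc]
    _ = (a * b * a) * b * (a * b * b * a) * (b * (a * b * a)) := by
        rw [mul_braid_eq_braid_mul h, braid_mul_eq_mul_braid h]
    _ = (a * b * a) * (b * a * b) * (b * a * b) * (a * b * a) := by
        simp only [mul_assoc]
    _ = (a * b * a) ^ 4 := by
        rw [← h]
        simp only [pow_succ, pow_zero, one_mul, mul_assoc]

end BraidRelation

/-- The algebraic identity underlying the genus-2 relation. -/
theorem genus_two_identity {G : Type*} [Group G] (a b : G) (hbraid : a * b * a = b * a * b) :
    (b * a) ^ 6 = a ^ 2 * (b * a ^ 2 * b) ^ 2 * a ^ 2 := by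
  rw [BraidRelation.mul_pow_six_eq_pow_four hbraid,
    BraidRelation.sq_mul_sq_mul_sq_eq_pow_four hbraid]
end

section
/- Let G be a group and a₁, a₂ ∈ G with a₁a₂a₁ = a₂a₁a₂, let s = (a₂a₁)⁶, and suppose s commutes with a₁ and a₂. Let φ : G → ℝ be a homogeneous quasimorphism with defect D(φ) and φ(a₁) = φ(a₂). Then D(φ) ≥ 6|φ(a₁)| − (1/2)|φ(s)|. -/
/-!
Write `b = a₂ a₁² a₂`. Using the braid relation, `(a₂a₁)⁶ = a₁² b² a₁²`, so `b² = a₁⁻² s a₁⁻²`. A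
homogeneous quasimorphism is conjugation-invariant and additive on commuting pairs, and `s`
commutes with `a₁`; hence `2 φ(b) = φ(s) - 4 φ(a₁)`. Since `b` is conjugate to `a₂² a₁²`, the
defect at the pair `(a₂², a₁²)` is `|φ(s)/2 - 6 φ(a₁)|`, which gives the bound.
-/

theorem eq_zero_of_forall_nat_mul_abs_le {c K : ℝ} (h : ∀ n : ℕ, n * |c| ≤ K) : c = 0 := by
  by_contra hc
  obtain ⟨n, hn⟩ := exists_nat_gt (K / |c|)
  rw [div_lt_iff₀ (abs_pos.mpr hc)] at hn
  linarith [h n]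

theorem mul_pow_six_eq_of_braid {G : Type*} [Group G] {a₁ a₂ : G}
    (hbraid : a₁ * a₂ * a₁ = a₂ * a₁ * a₂) :
    (a₂ * a₁) ^ 6 = a₁ ^ 2 * (a₂ * a₁ ^ 2 * a₂) ^ 2 * a₁ ^ 2 := by
  have braid : ∀ x : G, a₁ * (a₂ * (a₁ * x)) = a₂ * (a₁ * (a₂ * x)) := fun x => by
    simp only [← mul_assoc, hbraid]
  simp only [pow_succ, pow_zero, one_mul, mul_assoc]
  nth_rewrite 2 [braid]
  nth_rewrite 1 [← braid]
  nth_rewrite 1 [← braid]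
  nth_rewrite 2 [← braid]
  rfl

structure IsHomogeneousQuasimorphism {G : Type*} [Group G] (φ : G → ℝ) (D : ℝ) : Prop where
  abs_map_mul_sub_le : ∀ u v : G, |φ (u * v) - φ u - φ v| ≤ D
  map_zpow : ∀ (u : G) (n : ℤ), φ (u ^ n) = n * φ u

namespace IsHomogeneousQuasimorphism

variable {G : Type*} [Group G] {φ : G → ℝ} {D : ℝ}

theorem map_pow (hφ : IsHomogeneousQuasimorphism φ D) (u : G) (n : ℕ) :
    φ (u ^ n) = n * φ u := by
  exact_mod_cast hφ.map_zpow u n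

theorem map_inv (hφ : IsHomogeneousQuasimorphism φ D) (u : G) : φ u⁻¹ = -φ u := by
  simpa using hφ.map_zpow u (-1)

theorem map_mul_of_commute (hφ : IsHomogeneousQuasimorphism φ D) {x y : G} (h : Commute x y) :
    φ (x * y) = φ x + φ y := by
  suffices φ (x * y) - φ x - φ y = 0 by linarith
  refine eq_zero_of_forall_nat_mul_abs_le (K := D) fun n => ?_
  have := hφ.abs_map_mul_sub_le (x ^ n) (y ^ n)
  rw [← h.mul_pow, hφ.map_pow, hφ.map_pow, hφ.map_pow] at this
  calc (n : ℝ) * |φ (x * y) - φ x - φ y| = |n * φ (x * y) - n * φ x - n * φ y| := by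
        rw [← mul_sub, ← mul_sub, abs_mul, Nat.abs_cast]
    _ ≤ D := this

theorem map_conj (hφ : IsHomogeneousQuasimorphism φ D) (g x : G) : φ (g * x * g⁻¹) = φ x := by
  suffices φ (g * x * g⁻¹) - φ x = 0 by linarith
  refine eq_zero_of_forall_nat_mul_abs_le (K := D + D) fun n => ?_
  have h₁ := hφ.abs_map_mul_sub_le (g * x ^ n) g⁻¹
  have h₂ := hφ.abs_map_mul_sub_le g (x ^ n)
  rw [hφ.map_inv] at h₁
  calc (n : ℝ) * |φ (g * x * g⁻¹) - φ x| = |φ (g * x ^ n * g⁻¹) - φ (x ^ n)| := by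
        rw [← conj_pow, hφ.map_pow, hφ.map_pow, ← mul_sub, abs_mul, Nat.abs_cast]
    _ = |(φ (g * x ^ n * g⁻¹) - φ (g * x ^ n) - -φ g) + (φ (g * x ^ n) - φ g - φ (x ^ n))| := by
        ring_nf
    _ ≤ D + D := (abs_add_le _ _).trans (add_le_add h₁ h₂)

theorem map_sq_mul_sq_of_braid (hφ : IsHomogeneousQuasimorphism φ D) {a₁ a₂ s : G}
    (hbraid : a₁ * a₂ * a₁ = a₂ * a₁ * a₂) (hs : s = (a₂ * a₁) ^ 6) (hcomm : Commute s a₁) :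
    φ (a₂ ^ 2 * a₁ ^ 2) = φ s / 2 - 2 * φ a₁ := by
  have hconj : φ (a₂ * a₁ ^ 2 * a₂) = φ (a₂ ^ 2 * a₁ ^ 2) := by
    rw [show a₂ * a₁ ^ 2 * a₂ = a₂⁻¹ * (a₂ ^ 2 * a₁ ^ 2) * a₂⁻¹⁻¹ by group, hφ.map_conj]
  have hsq_conj :
      (a₂ * a₁ ^ 2 * a₂) ^ 2 = a₁ ^ (-2 : ℤ) * (s * a₁ ^ (-4 : ℤ)) * (a₁ ^ (-2 : ℤ))⁻¹ := by
    rw [hs, mul_pow_six_eq_of_braid hbraid]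
    group
  have hsq : 2 * φ (a₂ * a₁ ^ 2 * a₂) = φ s - 4 * φ a₁ := by
    have h := hφ.map_pow (a₂ * a₁ ^ 2 * a₂) 2
    rw [hsq_conj, hφ.map_conj, hφ.map_mul_of_commute (hcomm.zpow_right _), hφ.map_zpow] at h
    push_cast at h
    linarith
  linarith

end IsHomogeneousQuasimorphism

theorem genus_two_hyperelliptic_defect_bound_general {G : Type*} [Group G] (a₁ a₂ s : G)
    (hbraid : a₁ * a₂ * a₁ = a₂ * a₁ * a₂)
    (hs : s = (a₂ * a₁) ^ 6)
    (hs1 : s * a₁ = a₁ * s)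
    (φ : G → ℝ) (D : ℝ)
    (hq : ∀ u v : G, |φ (u * v) - φ u - φ v| ≤ D)
    (hh : ∀ (u : G) (n : ℤ), φ (u ^ n) = n * φ u)
    (e : φ a₁ = φ a₂) :
    6 * |φ a₁| - (1 / 2) * |φ s| ≤ D := by
  have hφ : IsHomogeneousQuasimorphism φ D := ⟨hq, hh⟩
  have hdefect := hφ.abs_map_mul_sub_le (a₂ ^ 2) (a₁ ^ 2)
  rw [hφ.map_sq_mul_sq_of_braid hbraid hs hs1, hφ.map_pow a₂, hφ.map_pow a₁, ← e] at hdefect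
  calc 6 * |φ a₁| - (1 / 2) * |φ s| = |6 * φ a₁| - |φ s / 2| := by
        rw [abs_mul, abs_div]; norm_num; ring
    _ ≤ |φ s / 2 - 6 * φ a₁| := by rw [abs_sub_comm]; exact abs_sub_abs_le_abs_sub _ _
    _ ≤ D := by convert hdefect using 2; push_cast; ring

/-- The genus-2 hyperelliptic relation forces D ≥ 6|φ(a₁)| − (1/2)|φ(s)|. -/
theorem genus_two_hyperelliptic_defect_bound {G : Type*} [Group G] (a₁ a₂ s : G)
    (hbraid : a₁ * a₂ * a₁ = a₂ * a₁ * a₂)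
    (hs : s = (a₂ * a₁) ^ 6)
    (hs1 : s * a₁ = a₁ * s) (hs2 : s * a₂ = a₂ * s)
    (φ : G → ℝ) (D : ℝ)
    (hq : ∀ u v : G, |φ (u * v) - φ u - φ v| ≤ D)
    (hh : ∀ (u : G) (n : ℤ), φ (u ^ n) = n * φ u)
    (e : φ a₁ = φ a₂) :
    6 * |φ a₁| - (1 / 2) * |φ s| ≤ D :=
  genus_two_hyperelliptic_defect_bound_general a₁ a₂ s hbraid hs hs1 φ D hq hh e
end
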